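/- arXiv:1702.08660 — 5 statements merged into one kernel-verified Lean document; each statement's English description precedes it below -/
import Mathlib

section
/- Let k ≥ 1 and let p₁,…,p_k be generating polynomials of finite sets S₁,…,S_k ⊆ ℕ. Define a(t,u) = Σ_{i=1}^{k} p_i(t) u^i and b(t,u) = Σ_{i=0}^{k−1} u^i. Then the set of x with (x, k) in the Minkowski sum supp(a) ⊕ supp(b) ⊆ ℕ² equals S₁ ∪ ⋯ ∪ S_k. -/
/-! Adding `supp(b) = {0} × [0, k)` to `supp(a)` moves each point `(x, i + 1)` of row `i + 1`
through the rows `i + 1, …, i + k`; since `i + 1 ≤ k ≤ i + k`, every row of `supp(a)` is moved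
through row `k`, and nothing else reaches it. -/

theorem Nat.mk_mem_image2_add_vertical_segment_iff {A : Set (ℕ × ℕ)} {x n k : ℕ} :
    (x, n) ∈ Set.image2 (· + ·) A {p : ℕ × ℕ | p.1 = 0 ∧ p.2 < k} ↔
      ∃ j ≤ n, n < j + k ∧ (x, j) ∈ A := by
  constructor
  · rintro ⟨⟨y, j⟩, hA, ⟨_, m⟩, ⟨rfl, hm⟩, hsum⟩
    obtain ⟨rfl, rfl⟩ : y = x ∧ j + m = n := by simpa using hsum
    exact ⟨j, by omega, by omega, hA⟩
  · rintro ⟨j, hjn, hnj, hA⟩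
    refine ⟨(x, j), hA, (0, n - j), ⟨rfl, by omega⟩, ?_⟩
    simp only [Prod.mk_add_mk, add_zero, Nat.add_sub_cancel' hjn]

theorem minkowski_sum_encodes_union_general (k : ℕ) (S : Fin k → Set ℕ) :
    {x : ℕ | (x, k) ∈ Set.image2 (· + ·)
        {p : ℕ × ℕ | ∃ i : Fin k, p.2 = (i : ℕ) + 1 ∧ p.1 ∈ S i}
        {p : ℕ × ℕ | p.1 = 0 ∧ p.2 < k}} = ⋃ i, S i := by
  ext x
  simp only [Set.mem_ofPred_eq, Nat.mk_mem_image2_add_vertical_segment_iff, Set.mem_iUnion]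
  constructor
  · rintro ⟨_, _, _, i, rfl, hx⟩
    exact ⟨i, hx⟩
  · rintro ⟨i, hx⟩
    exact ⟨i + 1, i.is_lt, by omega, i, rfl, hx⟩

theorem minkowski_sum_encodes_union (k : ℕ) (hk : 1 ≤ k) (S : Fin k → Set ℕ) :
    {x : ℕ | (x, k) ∈ Set.image2 (· + ·)
        {p : ℕ × ℕ | ∃ i : Fin k, p.2 = (i : ℕ) + 1 ∧ p.1 ∈ S i}
        {p : ℕ × ℕ | p.1 = 0 ∧ p.2 < k}} = ⋃ i, S i :=
  minkowski_sum_encodes_union_general k S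
end

section
/- Let P₁,…,P_m ⊆ ℝ^{n+1} be convex sets and let S = {x ∈ ℤ : ∃ y ∈ ℤ^n, ⋁_{i=1}^m (x,y) ∈ P_i}. If |S| > k^{n+1} · m, then S contains a non-trivial (k+1)-term arithmetic progression. -/
theorem union_projection_contains_ap (n k m : ℕ) (hk : 2 ≤ k) (hm : 1 ≤ m)
    (P : Fin m → Set (ℝ × (Fin n → ℝ))) (hP : ∀ i, Convex ℝ (P i))
    (T : Finset ℤ)
    (hT : ↑T ⊆ {x : ℤ | ∃ y : Fin n → ℤ, ∃ i,
        (((x : ℝ), fun t => (y t : ℝ)) : ℝ × (Fin n → ℝ)) ∈ P i})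
    (hcard : k ^ (n + 1) * m < T.card) :
    ∃ a d : ℤ, d ≠ 0 ∧ ∀ l : ℕ, l ≤ k →
      a + (l : ℤ) * d ∈ {x : ℤ | ∃ y : Fin n → ℤ, ∃ i,
        (((x : ℝ), fun t => (y t : ℝ)) : ℝ × (Fin n → ℝ)) ∈ P i} := by
  classical
  haveI : NeZero k := ⟨by omega⟩
  haveI : Nonempty (Fin m) := ⟨⟨0, by omega⟩⟩
  have h : ∀ x ∈ T, ∃ y : Fin n → ℤ, ∃ i,
      (((x : ℝ), fun t => (y t : ℝ)) : ℝ × (Fin n → ℝ)) ∈ P i :=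
    fun x hx => hT hx
  choose! Y I hmem using h
  have hcard' : (Finset.univ : Finset (Fin m × ZMod k × (Fin n → ZMod k))).card < T.card := by
    rw [Finset.card_univ]
    have : Fintype.card (Fin m × ZMod k × (Fin n → ZMod k)) = k ^ (n + 1) * m := by
      simp [Fintype.card_prod, Fintype.card_fun, ZMod.card, pow_succ]
      ring
    omega
  obtain ⟨x₁, hx₁, x₂, hx₂, hne, hfeq⟩ :=
    Finset.exists_ne_map_eq_of_card_lt_of_maps_to hcard'
      (f := fun x => ((I x, (x : ZMod k), fun t => ((Y x t : ℤ) : ZMod k)) :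
        Fin m × ZMod k × (Fin n → ZMod k)))
      (fun x _ => Finset.mem_univ _)
  simp only [Prod.mk.injEq] at hfeq
  obtain ⟨h1, h2, h3⟩ := hfeq
  have hdvd : (k : ℤ) ∣ x₂ - x₁ := ((ZMod.intCast_eq_intCast_iff _ _ _).mp h2).dvd
  obtain ⟨d, hd⟩ := hdvd
  have hd0 : d ≠ 0 := by
    intro h0
    apply hne
    have : x₂ - x₁ = 0 := by rw [hd, h0, mul_zero]
    omega
  have hedvd : ∀ s, ∃ e : ℤ, Y x₂ s - Y x₁ s = k * e := by
    intro s
    have := congrFun h3 s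
    exact ((ZMod.intCast_eq_intCast_iff _ _ _).mp this).dvd
  choose e he using hedvd
  refine ⟨x₁, d, hd0, ?_⟩
  intro l hl
  refine ⟨fun s => Y x₁ s + l * e s, I x₁, ?_⟩
  have hk' : (k : ℝ) ≠ 0 := by positivity
  set t : ℝ := (l : ℝ) / k with ht
  have ht0 : 0 ≤ t := by positivity
  have ht1 : t ≤ 1 := by
    rw [ht, div_le_one (by positivity)]
    exact_mod_cast hl
  have m₁ := hmem x₁ hx₁
  have m₂ := hmem x₂ hx₂
  rw [← h1] at m₂
  have hcomb := (hP (I x₁)) m₁ m₂ (by linarith : (0:ℝ) ≤ 1 - t) ht0 (by ring)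
  have hdr : (x₂ : ℝ) = x₁ + k * d := by
    have h' : x₂ = x₁ + (k : ℤ) * d := by linarith [hd]
    exact_mod_cast h'
  have key : ((((x₁ + (l : ℤ) * d : ℤ) : ℝ), fun s => ((Y x₁ s + l * e s : ℤ) : ℝ)) :
      ℝ × (Fin n → ℝ))
      = (1 - t) • (((x₁ : ℝ), fun s => ((Y x₁ s : ℤ) : ℝ)) : ℝ × (Fin n → ℝ))
        + t • (((x₂ : ℝ), fun s => ((Y x₂ s : ℤ) : ℝ)) : ℝ × (Fin n → ℝ)) := by
    apply Prod.ext
    · simp only [Prod.fst_add, Prod.smul_fst, smul_eq_mul]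
      rw [hdr, ht]
      push_cast
      field_simp
      ring
    · simp only [Prod.snd_add, Prod.smul_snd]
      funext s
      simp only [Pi.add_apply, Pi.smul_apply, smul_eq_mul]
      have hys : (Y x₂ s : ℝ) = Y x₁ s + k * e s := by
        have h' : Y x₂ s = Y x₁ s + (k : ℤ) * e s := by linarith [he s]
        exact_mod_cast h'
      rw [hys, ht]
      push_cast
      field_simp
      ring
  beta_reduce
  rw [key]
  exact hcomb
end

section
/- The language SQUARES (the set of perfect squares) cannot be represented in each initial segment by a set of the form {x ∈ ℤ : ∃ y ∈ ℤ^n, Φ_r(x,y)} where Φ_r is a Boolean combination of linear inequalities defining a union of at most poly(r) convex polyhedra, because: for every n, k, m there is a bound B(n,k,m) = k^{n+1}·m such that any such set of cardinality exceeding B contains a non-trivial 4-term AP, while the number of squares below 2^r exceeds any polynomial in r for large r and squares contain no non-trivial 4-term AP. -/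
/-!
Fermat–Euler descent. Write four squares in arithmetic progression with difference `D > 0` as
`x₁², x₂², x₃², x₄²` with `gcd(x₁, x₂) = 1`. Then all `xᵢ` are odd and `4 ∣ D`, and
`(x₂x₃)² − (x₁x₄)² = 2D²` splits as `x₂x₃ = 2a² + b²`, `D = 2ab`. Now
`(a² + b²)(4a² + b²) = (x₂² + ab)²` with coprime factors, so `4a² + b² = f²`, `a² + b² = e²`, and
`f² − e² = 3a²` splits as `f = 3s² + t²`, `a = 2st`, whence `b² = (t² − s²)(t² − 9s²)`. The four
factors `t ± s`, `t ± 3s` are pairwise coprime, hence squares (or a sign pattern impossible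
mod 3), and they form a new progression of squares whose largest term is at most `f < x₄²`.

Pigeonhole. If more than `m · 3^(n+1)` integers `x` have a lattice point `(x, y)` in one of `m`
convex sets, two of these points lie in the same set and agree modulo `3`; the points at a third
and two thirds of the segment joining them are again lattice points of that set. Their first
coordinates form a non-trivial 4-term progression inside the projection. Since there are
`2^⌊r/2⌋` squares below `2^r`, more than `3^(n+1) (r + 2)^c` for suitable `r`, the projection
cannot consist of these squares.
-/

theorem IsCoprime.of_linear_forms {R : Type*} [CommRing R] {x y a b : R} (p q r s : R)
    (hxy : IsCoprime x y) (ha : a = p * x + q * y) (hb : b = r * x + s * y)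
    (had : IsCoprime a (p * s - q * r)) : IsCoprime a b := by
  obtain ⟨u, v, huv⟩ := hxy
  obtain ⟨α, β, hαβ⟩ := had
  exact ⟨α + β * (u * s - v * r), β * (v * p - u * q), by
    rw [ha, hb] at *; linear_combination hαβ + β * (p * s - q * r) * huv⟩

namespace Int

theorem exists_sq_of_isCoprime_of_mul_eq_sq {u v m : ℤ} (huv : IsCoprime u v) (hu : 0 < u)
    (hv : 0 < v) (hm : 0 ≤ m) (h : u * v = m ^ 2) :
    ∃ s t : ℤ, 0 < s ∧ 0 < t ∧ IsCoprime s t ∧ u = s ^ 2 ∧ v = t ^ 2 ∧ s * t = m := by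
  have root : ∀ {w z : ℤ}, IsCoprime w z → 0 < w → w * z = m ^ 2 → ∃ s, 0 < s ∧ w = s ^ 2 := by
    intro w z hwz hw h
    obtain ⟨s, hs | hs⟩ := Int.sq_of_isCoprime hwz h
    · exact ⟨|s|, abs_pos.2 (by rintro rfl; simp [hs] at hw), by rw [sq_abs, hs]⟩
    · nlinarith [sq_nonneg s]
  obtain ⟨s, hs, rfl⟩ := root huv hu h
  obtain ⟨t, ht, rfl⟩ := root huv.symm hv (by rw [mul_comm, h])
  exact ⟨s, t, hs, ht, (IsCoprime.pow_iff two_pos two_pos).1 huv, rfl, rfl,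
    (sq_eq_sq₀ (by positivity) hm).1 (by rw [mul_pow, h])⟩

theorem exists_add_eq_prime_mul_sq_add_sq {p u v m : ℤ} (hp : Prime p) (huv : IsCoprime u v)
    (hu : 0 < u) (hv : 0 < v) (hm : 0 ≤ m) (h : u * v = p * m ^ 2) :
    ∃ s t : ℤ, 0 < s ∧ 0 < t ∧ IsCoprime s t ∧ u + v = p * s ^ 2 + t ^ 2 ∧ s * t = m := by
  wlog hpu : p ∣ u generalizing u v
  · have hpv : p ∣ v := (hp.dvd_or_dvd ⟨m ^ 2, h⟩).resolve_left hpu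
    rw [add_comm]
    exact this huv.symm hv hu (by rw [mul_comm, h]) hpv
  obtain ⟨u', rfl⟩ := hpu
  have hp0 : 0 < p := by nlinarith [sq_nonneg m, mul_pos hu hv]
  have hu' : 0 < u' := pos_of_mul_pos_right hu hp0.le
  obtain ⟨s, t, hs, ht, hst, rfl, rfl, hm⟩ :=
    exists_sq_of_isCoprime_of_mul_eq_sq huv.of_mul_left_right hu' hv hm
      (mul_left_cancel₀ hp.ne_zero (by rw [← h]; ring))
  exact ⟨s, t, hs, ht, hst, rfl, hm⟩

theorem exists_eq_prime_mul_sq_add_sq_of_sq_sub_sq {p P Q m : ℤ} (hp : Prime p) (hp0 : 0 < p)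
    (hP : Odd P) (hQ : Odd Q) (hPQ : IsCoprime P Q) (hP0 : 0 < P) (hm : 0 < m)
    (h : P ^ 2 - Q ^ 2 = p * (2 * m) ^ 2) :
    ∃ s t : ℤ, 0 < s ∧ 0 < t ∧ IsCoprime s t ∧ P = p * s ^ 2 + t ^ 2 ∧ s * t = m := by
  obtain ⟨u, hu⟩ := hP.sub_odd hQ
  obtain ⟨v, hv⟩ := hP.add_odd hQ
  have hPuv : P = u + v := by omega
  have hQuv : Q = v - u := by omega
  have huv : u * v = p * m ^ 2 := mul_left_cancel₀ (four_ne_zero' ℤ) <| by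
    linear_combination h - (v + v) * hu - (P - Q) * hv
  have hu0 : 0 < u := by nlinarith [mul_pos (mul_pos hp0 hm) hm]
  have hv0 : 0 < v := by nlinarith [mul_pos (mul_pos hp0 hm) hm]
  have hcop : IsCoprime u v := by
    obtain ⟨α, β, hαβ⟩ := hPQ
    exact ⟨α - β, α + β, by linear_combination hαβ - α * hPuv - β * hQuv⟩
  obtain ⟨s, t, hs, ht, hst, hsum, rfl⟩ :=
    exists_add_eq_prime_mul_sq_add_sq hp hcop hu0 hv0 hm.le huv
  exact ⟨s, t, hs, ht, hst, by linear_combination hPuv + hsum, rfl⟩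

theorem exists_eq_mul_of_sq_eq_sq_mul {g x z : ℤ} (hg : 0 < g) (hx : 0 ≤ x)
    (h : x ^ 2 = g ^ 2 * z) : ∃ y, 0 ≤ y ∧ x = y * g ∧ y ^ 2 = z := by
  obtain ⟨y, rfl⟩ := (Int.pow_dvd_pow_iff two_ne_zero).1 ⟨z, h⟩
  exact ⟨y, nonneg_of_mul_nonneg_right hx hg, mul_comm g y,
    mul_left_cancel₀ (pow_ne_zero 2 hg.ne') (by rw [← h]; ring)⟩

theorem odd_and_four_dvd_of_sq_add_sq_eq_two_mul_sq {x y z : ℤ} (hxy : IsCoprime x y)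
    (h : x ^ 2 + z ^ 2 = 2 * y ^ 2) : Odd x ∧ 4 ∣ y ^ 2 - x ^ 2 := by
  have h4 : 4 ∣ y ^ 2 - x ^ 2 := by
    have mod4 : ∀ a b c : ZMod 4, a ^ 2 + c ^ 2 = 2 * b ^ 2 → a ^ 2 = b ^ 2 := by decide
    have := mod4 x y z (by exact_mod_cast congrArg (Int.cast : ℤ → ZMod 4) h)
    exact (ZMod.intCast_eq_intCast_iff_dvd_sub _ _ 4).1 (by exact_mod_cast this)
  refine ⟨?_, h4⟩
  by_contra hx
  rw [Int.not_odd_iff_even] at hx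
  have hy : Odd y := Int.isCoprime_two_left.1 (hxy.of_isCoprime_of_dvd_left hx.two_dvd)
  have hodd : Odd (y ^ 2 - x ^ 2) := hy.pow.sub_even (hx.pow_of_ne_zero two_ne_zero)
  exact Int.not_even_iff_odd.2 hodd (even_iff_two_dvd.2 ((by norm_num : (2 : ℤ) ∣ 4).trans h4))

end Int

def FourSquaresAP (a d : ℤ) : Prop :=
  IsSquare a ∧ IsSquare (a + d) ∧ IsSquare (a + 2 * d) ∧ IsSquare (a + 3 * d)

theorem isCoprime_mul_mul_of_sq_ap {x₁ x₂ x₃ x₄ D : ℤ} (h₁₂ : IsCoprime x₁ x₂) (hx₂ : Odd x₂)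
    (hx₃ : Odd x₃) (h₂ : x₂ ^ 2 = x₁ ^ 2 + D) (h₃ : x₃ ^ 2 = x₁ ^ 2 + 2 * D)
    (h₄ : x₄ ^ 2 = x₁ ^ 2 + 3 * D) : IsCoprime (x₂ * x₃) (x₁ * x₄) := by
  have hsq := (IsCoprime.pow_iff two_pos two_pos).2 h₁₂
  have c₂₄ : IsCoprime (x₂ ^ 2) (x₄ ^ 2) := hsq.of_linear_forms 0 1 (-2) 3 (by ring)
    (by linear_combination h₄ - 3 * h₂) (by norm_num; exact hx₂.pow)
  have c₃₁ : IsCoprime (x₃ ^ 2) (x₁ ^ 2) := hsq.of_linear_forms (-1) 2 1 0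
    (by linear_combination h₃ - 2 * h₂) (by ring)
    (by simpa [IsCoprime.neg_right_iff] using hx₃.pow)
  have c₃₄ : IsCoprime (x₃ ^ 2) (x₄ ^ 2) := hsq.of_linear_forms (-1) 2 (-2) 3
    (by linear_combination h₃ - 2 * h₂) (by linear_combination h₄ - 3 * h₂)
    (by norm_num [isCoprime_one_right])
  rw [IsCoprime.pow_iff two_pos two_pos] at c₂₄ c₃₁ c₃₄
  exact (h₁₂.symm.mul_right c₂₄).mul_left (c₃₁.mul_right c₃₄)

theorem exists_two_mul_sq_add_sq_of_isCoprime_sq_ap {x₁ x₂ x₃ x₄ D : ℤ} (h₁₂ : IsCoprime x₁ x₂)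
    (hx₂ : 0 ≤ x₂) (hx₃ : 0 ≤ x₃) (hD : 0 < D) (h₂ : x₂ ^ 2 = x₁ ^ 2 + D)
    (h₃ : x₃ ^ 2 = x₁ ^ 2 + 2 * D) (h₄ : x₄ ^ 2 = x₁ ^ 2 + 3 * D) :
    ∃ a b : ℤ, 0 < a ∧ 0 < b ∧ IsCoprime a b ∧ Even a ∧ Odd b ∧ x₂ * x₃ = 2 * a ^ 2 + b ^ 2 ∧
      (a ^ 2 + b ^ 2) * (4 * a ^ 2 + b ^ 2) = (x₂ ^ 2 + a * b) ^ 2 := by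
  obtain ⟨o₁, k, hk⟩ := Int.odd_and_four_dvd_of_sq_add_sq_eq_two_mul_sq h₁₂
    (z := x₃) (by linear_combination h₃ - 2 * h₂)
  have hDk : D = 4 * k := by linarith
  have hDe : Even D := ⟨2 * k, by omega⟩
  have odd_of : ∀ {x : ℤ} (j : ℤ), x ^ 2 = x₁ ^ 2 + j * D → Odd x := fun j hx =>
    (Int.odd_pow' two_ne_zero).1 <| hx ▸ o₁.pow.add_even (hDe.mul_left j)
  have o₂ : Odd x₂ := odd_of 1 (by linear_combination h₂)
  have o₃ : Odd x₃ := odd_of 2 h₃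
  have o₄ : Odd x₄ := odd_of 3 h₄
  have pos_of : ∀ {x : ℤ}, 0 ≤ x → Odd x → 0 < x := fun hx ho =>
    lt_of_le_of_ne hx (by rintro rfl; simp at ho)
  obtain ⟨a, b, ha, hb, hab, hPab, habk⟩ :=
    Int.exists_eq_prime_mul_sq_add_sq_of_sq_sub_sq Int.prime_two two_pos (o₂.mul o₃) (o₁.mul o₄)
      (isCoprime_mul_mul_of_sq_ap h₁₂ o₂ o₃ h₂ h₃ h₄) (mul_pos (pos_of hx₂ o₂) (pos_of hx₃ o₃))
      (m := 2 * k) (by omega) (by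
        linear_combination x₃ ^ 2 * h₂ + (x₁ ^ 2 + D) * h₃ - x₁ ^ 2 * h₄ + 2 * (D + 4 * k) * hDk)
  have hbo : Odd b := (Int.odd_pow' two_ne_zero).1 <| by
    rw [show b ^ 2 = x₂ * x₃ - 2 * a ^ 2 by linarith]
    exact (o₂.mul o₃).sub_even (even_two_mul _)
  have hae : Even a :=
    (Int.even_mul.1 ⟨k, by linarith⟩).resolve_right (Int.not_even_iff_odd.2 hbo)
  refine ⟨a, b, ha, hb, hab, hae, hbo, hPab, ?_⟩
  linear_combination (-(x₂ * x₃ + 2 * a ^ 2 + b ^ 2)) * hPab + x₂ ^ 2 * h₃ + x₂ ^ 2 * hDk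
    - 2 * x₂ ^ 2 * habk - x₂ ^ 2 * h₂

theorem exists_sq_sub_sq_mul_eq_sq_of_sq_add_sq_mul_eq_sq {a b w : ℤ} (ha : 0 < a) (hb : 0 < b)
    (hab : IsCoprime a b) (hae : Even a) (hbo : Odd b) (hw : 0 ≤ w)
    (h : (a ^ 2 + b ^ 2) * (4 * a ^ 2 + b ^ 2) = w ^ 2) :
    ∃ s t : ℤ, 0 < s ∧ 0 < t ∧ IsCoprime s t ∧ Odd (s + t) ∧
      (t ^ 2 - s ^ 2) * (t ^ 2 - 9 * s ^ 2) = b ^ 2 ∧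
      (3 * s ^ 2 + t ^ 2) ^ 2 = 4 * a ^ 2 + b ^ 2 := by
  have h3 : IsCoprime (a ^ 2 + b ^ 2) 3 := by
    rw [isCoprime_comm, Prime.coprime_iff_not_dvd Int.prime_three]
    intro h3
    have mod3 : ∀ x y : ZMod 3, x ^ 2 + y ^ 2 = 0 → x = 0 ∧ y = 0 := by decide
    obtain ⟨hx, hy⟩ := mod3 a b (by exact_mod_cast (ZMod.intCast_zmod_eq_zero_iff_dvd _ 3).2 h3)
    exact Int.prime_three.not_isUnit <| hab.isUnit_of_dvd'
      ((ZMod.intCast_zmod_eq_zero_iff_dvd _ 3).1 hx)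
      ((ZMod.intCast_zmod_eq_zero_iff_dvd _ 3).1 hy)
  have hcop : IsCoprime (a ^ 2 + b ^ 2) (4 * a ^ 2 + b ^ 2) :=
    ((IsCoprime.pow_iff two_pos two_pos).2 hab).of_linear_forms 1 1 4 1 (by ring) (by ring)
      (by simpa [IsCoprime.neg_right_iff] using h3)
  obtain ⟨e, f, he, hf, hef, he2, hf2, -⟩ :=
    Int.exists_sq_of_isCoprime_of_mul_eq_sq hcop (by positivity) (by positivity) hw h
  have ha2 : Even (a ^ 2) := hae.pow_of_ne_zero two_ne_zero
  obtain ⟨a', rfl⟩ := hae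
  have odd_of : ∀ {x : ℤ} (k : ℤ), k * (a' + a') ^ 2 + b ^ 2 = x ^ 2 → Odd x := fun k hx =>
    (Int.odd_pow' two_ne_zero).1 <| hx ▸ (ha2.mul_left k).add_odd hbo.pow
  have hoe : Odd e := odd_of 1 (by linear_combination he2)
  have hof : Odd f := odd_of 4 hf2
  obtain ⟨s, t, hs, ht, hst, hfst, rfl⟩ :=
    Int.exists_eq_prime_mul_sq_add_sq_of_sq_sub_sq Int.prime_three three_pos hof hoe hef.symm hf
      (by omega : 0 < a') (by linear_combination he2 - hf2)
  refine ⟨s, t, hs, ht, hst, ?_, by linear_combination -hf2 - (f + 3 * s ^ 2 + t ^ 2) * hfst,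
    by rw [← hfst, hf2]⟩
  have : Odd (3 * s ^ 2 + t ^ 2) := hfst ▸ hof
  simpa [parity_simps, Int.odd_mul, (by decide : Odd (3 : ℤ))] using this

theorem fourSquaresAP_of_sq_sub_sq_mul_eq_sq {S T b : ℤ} (hS : 0 < S) (hT : 0 < T)
    (hST : IsCoprime S T) (hodd : Odd (S + T)) (h3 : ¬ 3 ∣ T)
    (h : (T ^ 2 - S ^ 2) * (T ^ 2 - 9 * S ^ 2) = b ^ 2) :
    FourSquaresAP (T - 3 * S) (2 * S) := by
  have o₁ : Odd (T - 3 * S) := by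
    rw [show T - 3 * S = S + T - 2 * (2 * S) by ring]; exact hodd.sub_even (even_two_mul _)
  have o₂ : Odd (T - S) := by
    rw [show T - S = S + T - 2 * S by ring]; exact hodd.sub_even (even_two_mul _)
  have o₃ : Odd (T + S) := by rwa [add_comm]
  have c₃ : IsCoprime (T - 3 * S) 3 := by
    rw [isCoprime_comm, Prime.coprime_iff_not_dvd Int.prime_three]
    exact fun h => h3 (by simpa using h.add (dvd_mul_right 3 S))
  have cop : ∀ {a : ℤ}, Odd a → ∀ n : ℕ, IsCoprime a (-2 ^ n) := fun ho n =>
    (IsCoprime.neg_right_iff _ _).2 (Int.isCoprime_two_right.2 ho).pow_right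
  have c₁₂ : IsCoprime (T - 3 * S) (T - S) :=
    hST.of_linear_forms (-3) 1 (-1) 1 (by ring) (by ring) (by simpa using cop o₁ 1)
  have c₁₃ : IsCoprime (T - 3 * S) (T + S) :=
    hST.of_linear_forms (-3) 1 1 1 (by ring) (by ring) (by simpa using cop o₁ 2)
  have c₁₄ : IsCoprime (T - 3 * S) (T + 3 * S) :=
    hST.of_linear_forms (-3) 1 3 1 (by ring) (by ring)
      (by simpa using ((Int.isCoprime_two_right.2 o₁).mul_right c₃).neg_right)
  have c₂₃ : IsCoprime (T - S) (T + S) :=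
    hST.of_linear_forms (-1) 1 1 1 (by ring) (by ring) (by simpa using cop o₂ 1)
  have c₂₄ : IsCoprime (T - S) (T + 3 * S) :=
    hST.of_linear_forms (-1) 1 3 1 (by ring) (by ring) (by simpa using cop o₂ 2)
  have c₃₄ : IsCoprime (T + S) (T + 3 * S) :=
    hST.of_linear_forms 1 1 3 1 (by ring) (by ring) (by simpa using cop o₃ 1)
  have hprod : (T - 3 * S) * (T - S) * (T + S) * (T + 3 * S) = b ^ 2 := by rw [← h]; ring
  have sq_of_pos : ∀ {F G : ℤ}, IsCoprime F G → F * G = b ^ 2 → 0 < F → ∃ x, F = x ^ 2 := by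
    intro F G hFG hFGb hF
    obtain ⟨x, hx | hx⟩ := Int.sq_of_isCoprime hFG hFGb
    · exact ⟨x, hx⟩
    · nlinarith [sq_nonneg x]
  obtain ⟨β, hβ⟩ := sq_of_pos ((c₁₃.symm.mul_right c₂₃.symm).mul_right c₃₄)
    (by linear_combination hprod) (by omega)
  obtain ⟨δ, hδ⟩ := sq_of_pos ((c₁₄.symm.mul_right c₂₄.symm).mul_right c₃₄.symm)
    (by linear_combination hprod) (by omega)
  obtain ⟨γ, hγ | hγ⟩ := Int.sq_of_isCoprime (c := b) ((c₁₂.mul_right c₁₃).mul_right c₁₄)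
    (by linear_combination hprod)
  · obtain ⟨α, hα⟩ := sq_of_pos ((c₁₂.symm.mul_right c₂₃).mul_right c₂₄)
      (by linear_combination hprod) (by nlinarith [sq_nonneg γ])
    exact ⟨⟨γ, by rw [hγ, sq]⟩, ⟨α, by linear_combination hα⟩, ⟨β, by linear_combination hβ⟩,
      ⟨δ, by linear_combination hδ⟩⟩
  · -- `T ≡ -γ²` and `T ≡ δ²` modulo 3 force `3 ∣ T`.
    have mod3 : ∀ t s g d : ZMod 3, t - 3 * s = -g ^ 2 → t + 3 * s = d ^ 2 → t = 0 := by decide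
    refine absurd ((ZMod.intCast_zmod_eq_zero_iff_dvd T 3).1 (mod3 T S γ δ ?_ ?_)) h3
    · exact_mod_cast congrArg (Int.cast : ℤ → ZMod 3) hγ
    · exact_mod_cast congrArg (Int.cast : ℤ → ZMod 3) hδ

theorem exists_fourSquaresAP_of_sq_sub_sq_mul_eq_sq {s t b : ℤ} (hs : 0 < s) (ht : 0 < t)
    (hst : IsCoprime s t) (hodd : Odd (s + t))
    (h : (t ^ 2 - s ^ 2) * (t ^ 2 - 9 * s ^ 2) = b ^ 2) :
    ∃ a d, 0 < d ∧ FourSquaresAP a d ∧ a + 3 * d ≤ 3 * s ^ 2 + t ^ 2 := by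
  by_cases h3 : 3 ∣ t
  · -- For `t = 3t₁` the equation reads `(s² - t₁²)(s² - 9t₁²) = (b / 3)²`,
    -- so `s` and `t₁` trade places.
    obtain ⟨t₁, rfl⟩ := h3
    obtain ⟨b₁, rfl⟩ : 3 ∣ b := Int.prime_three.dvd_of_dvd_pow (n := 2)
      ⟨3 * ((9 * t₁ ^ 2 - s ^ 2) * (t₁ ^ 2 - s ^ 2)), by linear_combination -h⟩
    have h3s : ¬ 3 ∣ s := fun h3s =>
      Int.prime_three.not_isUnit (hst.isUnit_of_dvd' h3s (dvd_mul_right 3 t₁))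
    have hodd' : Odd (t₁ + s) := by
      rw [show t₁ + s = s + 3 * t₁ - 2 * t₁ by ring]; exact hodd.sub_even (even_two_mul _)
    refine ⟨s - 3 * t₁, 2 * t₁, by omega, fourSquaresAP_of_sq_sub_sq_mul_eq_sq (by omega) hs
      hst.of_mul_right_right.symm hodd' h3s (b := b₁) ?_, by nlinarith⟩
    exact mul_left_cancel₀ (by norm_num : (9 : ℤ) ≠ 0) (by linear_combination h)
  · exact ⟨t - 3 * s, 2 * s, by omega, fourSquaresAP_of_sq_sub_sq_mul_eq_sq hs ht hst hodd h3 h,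
      by nlinarith⟩

theorem exists_fourSquaresAP_lt_of_isCoprime {x₁ x₂ x₃ x₄ D : ℤ} (h₁₂ : IsCoprime x₁ x₂)
    (hx₂ : 0 ≤ x₂) (hx₃ : 0 ≤ x₃) (hx₄ : 0 ≤ x₄) (hD : 0 < D) (h₂ : x₂ ^ 2 = x₁ ^ 2 + D)
    (h₃ : x₃ ^ 2 = x₁ ^ 2 + 2 * D) (h₄ : x₄ ^ 2 = x₁ ^ 2 + 3 * D) :
    ∃ a d, 0 < d ∧ FourSquaresAP a d ∧ a + 3 * d < x₄ ^ 2 := by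
  obtain ⟨a, b, ha, hb, hab, hae, hbo, hP, hw⟩ :=
    exists_two_mul_sq_add_sq_of_isCoprime_sq_ap h₁₂ hx₂ hx₃ hD h₂ h₃ h₄
  obtain ⟨s, t, hs, ht, hst, hodd, hb2, hf⟩ :=
    exists_sq_sub_sq_mul_eq_sq_of_sq_add_sq_mul_eq_sq ha hb hab hae hbo (by positivity) hw
  obtain ⟨a', d', hd', hAP, hle⟩ := exists_fourSquaresAP_of_sq_sub_sq_mul_eq_sq hs ht hst hodd hb2
  refine ⟨a', d', hd', hAP, ?_⟩
  -- `(a' + 3d')² ≤ (3s² + t²)² = 4a² + b² ≤ 2x₂x₃ < 2x₄² ≤ x₄⁴`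
  have hlt : ∀ {x : ℤ}, 0 ≤ x → x ^ 2 < x₄ ^ 2 → x < x₄ := fun hx h =>
    (pow_lt_pow_iff_left₀ hx hx₄ two_ne_zero).1 h
  have hP4 : x₂ * x₃ < x₄ ^ 2 := by
    rw [sq]; exact mul_lt_mul'' (hlt hx₂ (by linarith)) (hlt hx₃ (by linarith)) hx₂ hx₃
  have h0 : 0 ≤ a' + 3 * d' := by linarith [hAP.1.nonneg]
  have hsq : (a' + 3 * d') ^ 2 < 2 * x₄ ^ 2 := by
    nlinarith [pow_le_pow_left₀ h0 hle 2, sq_nonneg a]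
  nlinarith [sq_nonneg x₁]

theorem exists_fourSquaresAP_lt {a d : ℤ} (hd : 0 < d) (h : FourSquaresAP a d) :
    ∃ a' d', 0 < d' ∧ FourSquaresAP a' d' ∧ a' + 3 * d' < a + 3 * d := by
  have root : ∀ {z : ℤ}, IsSquare z → ∃ x, 0 ≤ x ∧ x ^ 2 = z := fun ⟨r, hr⟩ =>
    ⟨|r|, abs_nonneg r, by rw [sq_abs, hr, sq]⟩
  obtain ⟨⟨x₁, -, rfl⟩, ⟨x₂, hx₂, h₂⟩, ⟨x₃, hx₃, h₃⟩, ⟨x₄, hx₄, h₄⟩⟩ :=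
    And.imp root (And.imp root (And.imp root root)) h
  obtain ⟨g, y₁, y₂, hg, hy, rfl, rfl⟩ := Int.exists_gcd_one' (m := x₁) (n := x₂)
    (Int.gcd_pos_iff.2 (Or.inr (by rintro rfl; nlinarith)))
  have hg' : (0 : ℤ) < g := by exact_mod_cast hg
  have hd' : d = g ^ 2 * (y₂ ^ 2 - y₁ ^ 2) := by linear_combination -h₂
  obtain ⟨y₃, hy₃, rfl, h₃'⟩ := Int.exists_eq_mul_of_sq_eq_sq_mul hg' hx₃
    (z := y₁ ^ 2 + 2 * (y₂ ^ 2 - y₁ ^ 2)) (by linear_combination h₃ + 2 * hd')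
  obtain ⟨y₄, hy₄, rfl, h₄'⟩ := Int.exists_eq_mul_of_sq_eq_sq_mul hg' hx₄
    (z := y₁ ^ 2 + 3 * (y₂ ^ 2 - y₁ ^ 2)) (by linear_combination h₄ + 3 * hd')
  obtain ⟨a', d', hd'', hAP, hlt⟩ := exists_fourSquaresAP_lt_of_isCoprime
    (Int.isCoprime_iff_gcd_eq_one.2 hy) (nonneg_of_mul_nonneg_left hx₂ hg') hy₃ hy₄
    (pos_of_mul_pos_right (hd' ▸ hd) (sq_nonneg _)) (by ring) h₃' h₄'
  refine ⟨a', d', hd'', hAP, ?_⟩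
  have hg1 : y₄ ^ 2 ≤ (g : ℤ) ^ 2 * y₄ ^ 2 :=
    le_mul_of_one_le_left (sq_nonneg _) (one_le_pow₀ (by omega))
  nlinarith

theorem not_fourSquaresAP_of_pos {a d : ℤ} (hd : 0 < d) : ¬ FourSquaresAP a d := by
  intro h
  induction hn : (a + 3 * d).toNat using Nat.strong_induction_on generalizing a d with
  | _ n ih =>
    obtain ⟨a', d', hd', h', hlt⟩ := exists_fourSquaresAP_lt hd h
    exact ih _ (by have := h.1.nonneg; omega) hd' h' rfl

theorem not_fourSquaresAP {a d : ℤ} (hd : d ≠ 0) : ¬ FourSquaresAP a d := by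
  rcases hd.lt_or_gt with hd | hd
  · rintro ⟨h₀, h₁, h₂, h₃⟩
    refine not_fourSquaresAP_of_pos (neg_pos.2 hd) (a := a + 3 * d) ⟨h₃, ?_, ?_, ?_⟩
    · convert h₂ using 1; ring
    · convert h₁ using 1; ring
    · convert h₀ using 1; ring
  · exact not_fourSquaresAP_of_pos hd

section LatticeProjection

variable {ι : Type*} [Fintype ι]

def latticeProjection (C : Set (ℝ × (ι → ℝ))) : Set ℤ :=
  {x | ∃ y : ι → ℤ, ((x : ℝ), fun t => (y t : ℝ)) ∈ C}

theorem Convex.exists_ap_of_card_lt {C : Set (ℝ × (ι → ℝ))} (hC : Convex ℝ C) {k : ℕ}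
    (hk : 0 < k) {s : Finset ℤ} (hs : ∀ x ∈ s, x ∈ latticeProjection C)
    (hcard : k ^ (Fintype.card ι + 1) < s.card) :
    ∃ x δ : ℤ, δ ≠ 0 ∧ ∀ j ≤ k, x + j * δ ∈ latticeProjection C := by
  classical
  have : NeZero k := ⟨hk.ne'⟩
  choose y hy using hs
  obtain ⟨⟨x, hx⟩, ⟨x', hx'⟩, hne, heq⟩ := Fintype.exists_ne_map_eq_of_card_lt
    (fun p : s => (((p : ℤ) : ZMod k), fun t => ((y p p.2 t : ℤ) : ZMod k)))
    (by simpa [Fintype.card_prod, ZMod.card, pow_succ, mul_comm] using hcard)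
  simp only [Prod.mk.injEq, funext_iff, ZMod.intCast_eq_intCast_iff_dvd_sub] at heq
  obtain ⟨⟨δ, hδ⟩, hη⟩ := heq
  choose η hη using hη
  refine ⟨x, δ, ?_, fun j hj => ⟨fun t => y x hx t + j * η t, ?_⟩⟩
  · rintro rfl
    rw [mul_zero, sub_eq_zero] at hδ
    exact hne (Subtype.ext hδ.symm)
  · have hk' : (k : ℝ) ≠ 0 := by exact_mod_cast hk.ne'
    convert hC.add_smul_sub_mem (hy x hx) (hy x' hx')
      (t := (j : ℝ) / k)
      ⟨by positivity, div_le_one_of_le₀ (by exact_mod_cast hj) (by positivity)⟩ using 1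
    ext
    · simp only [Prod.fst_add, Prod.smul_fst, Prod.fst_sub, smul_eq_mul]
      rw [show (x' : ℝ) - x = k * δ by exact_mod_cast hδ]
      push_cast; field_simp
    · simp only [Prod.snd_add, Prod.smul_snd, Prod.snd_sub, Pi.add_apply, Pi.smul_apply,
        Pi.sub_apply, smul_eq_mul]
      rw [show (y x' hx' _ : ℝ) - y x hx _ = k * η _ by exact_mod_cast hη _]
      push_cast; field_simp

theorem exists_ap_of_card_lt_iUnion {I : Type*} [Fintype I] {P : I → Set (ℝ × (ι → ℝ))}
    (hP : ∀ i, Convex ℝ (P i)) {k : ℕ} (hk : 0 < k) {s : Finset ℤ}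
    (hs : ∀ x ∈ s, x ∈ ⋃ i, latticeProjection (P i))
    (hcard : Fintype.card I * k ^ (Fintype.card ι + 1) < s.card) :
    ∃ x δ : ℤ, δ ≠ 0 ∧ ∀ j ≤ k, x + j * δ ∈ ⋃ i, latticeProjection (P i) := by
  classical
  obtain ⟨x₀, hx₀⟩ := Finset.card_pos.1 ((Nat.zero_le _).trans_lt hcard)
  have : Nonempty I := (Set.mem_iUnion.1 (hs x₀ hx₀)).nonempty
  choose! f hf using fun x hx => Set.mem_iUnion.1 (hs x hx)
  obtain ⟨i, -, hi⟩ := Finset.exists_lt_card_fiber_of_mul_lt_card_of_maps_to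
    (t := Finset.univ) (fun x _ => Finset.mem_univ (f x)) (by simpa using hcard)
  obtain ⟨x, δ, hδ, hap⟩ := (hP i).exists_ap_of_card_lt hk (s := {x ∈ s | f x = i})
    (fun x hx => by obtain ⟨hxs, hfx⟩ := Finset.mem_filter.1 hx; exact hfx ▸ hf x hxs) hi
  exact ⟨x, δ, hδ, fun j hj => Set.mem_iUnion.2 ⟨i, hap j hj⟩⟩

end LatticeProjection

theorem exists_mul_pow_lt_two_pow_half (B c : ℕ) : ∃ r : ℕ, B * (r + 2) ^ c < 2 ^ (r / 2) := by
  set N := B * (4 * (c + 1)) ^ c + 1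
  refine ⟨2 * (N * (c + 1)), ?_⟩
  rw [Nat.mul_div_cancel_left _ two_pos]
  have hN : 1 ≤ N := by omega
  calc B * (2 * (N * (c + 1)) + 2) ^ c ≤ B * (4 * (c + 1) * N) ^ c := by gcongr; nlinarith
    _ = B * (4 * (c + 1)) ^ c * N ^ c := by rw [mul_pow, mul_assoc]
    _ < N * N ^ c := by gcongr; omega
    _ = N ^ (c + 1) := by ring
    _ < (2 ^ N) ^ (c + 1) := Nat.pow_lt_pow_left N.lt_two_pow_self (by omega)
    _ = 2 ^ (N * (c + 1)) := by rw [← pow_mul]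

theorem exists_finset_squares_lt_two_pow (r : ℕ) :
    ∃ s : Finset ℤ, s.card = 2 ^ (r / 2) ∧ ∀ x ∈ s, 0 ≤ x ∧ x < 2 ^ r ∧ IsSquare x := by
  refine ⟨(Finset.range (2 ^ (r / 2))).image (fun k : ℕ => (k : ℤ) ^ 2), ?_, ?_⟩
  · rw [Finset.card_image_of_injective _ (fun k l hkl => by simpa using hkl), Finset.card_range]
  · simp only [Finset.mem_image, Finset.mem_range]
    rintro _ ⟨k, hk, rfl⟩
    refine ⟨by positivity, ?_, IsSquare.sq _⟩
    have : k ^ 2 < 2 ^ r := calc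
      k ^ 2 < (2 ^ (r / 2)) ^ 2 := Nat.pow_lt_pow_left hk two_ne_zero
      _ = 2 ^ (2 * (r / 2)) := by rw [← pow_mul, mul_comm]
      _ ≤ 2 ^ r := Nat.pow_le_pow_right two_pos (Nat.mul_div_le r 2)
    exact_mod_cast this

theorem squares_not_polynomially_many_projected_convex_pieces :
    ¬ ∃ (n c : ℕ), ∀ r : ℕ, ∃ m : ℕ, m ≤ (r + 2) ^ c ∧
      ∃ P : Fin m → Set (ℝ × (Fin n → ℝ)),
        (∀ i, Convex ℝ (P i)) ∧
        {x : ℤ | ∃ y : Fin n → ℤ, ∃ i,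
            (((x : ℝ), fun t => (y t : ℝ)) : ℝ × (Fin n → ℝ)) ∈ P i} =
          {x : ℤ | 0 ≤ x ∧ x < 2 ^ r ∧ IsSquare x} := by
  rintro ⟨n, c, h⟩
  obtain ⟨r, hr⟩ := exists_mul_pow_lt_two_pow_half (3 ^ (n + 1)) c
  obtain ⟨m, hm, P, hP, hset⟩ := h r
  have hA : ⋃ i, latticeProjection (P i) = {x : ℤ | 0 ≤ x ∧ x < 2 ^ r ∧ IsSquare x} := by
    rw [← hset]; ext x; simp only [latticeProjection, Set.mem_iUnion, Set.mem_ofPred_eq]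
    exact exists_comm
  obtain ⟨s, hs_card, hs⟩ := exists_finset_squares_lt_two_pow r
  obtain ⟨x, δ, hδ, hap⟩ := exists_ap_of_card_lt_iUnion hP three_pos (s := s)
    (fun x hx => hA ▸ hs x hx) (by
      rw [Fintype.card_fin, Fintype.card_fin, hs_card]
      exact (Nat.mul_le_mul_right _ hm).trans_lt (by rw [mul_comm]; exact hr))
  simp only [hA, Set.mem_ofPred_eq] at hap
  exact not_fourSquaresAP hδ ⟨by simpa using (hap 0 (by norm_num)).2.2,
    by simpa using (hap 1 (by norm_num)).2.2, by simpa using (hap 2 (by norm_num)).2.2,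
    by simpa using (hap 3 le_rfl).2.2⟩
end

section
/- Let F(x̃,ỹ) = ⋀_k (a_k ∨ b_k ∨ c_k) be a 3-CNF formula in Boolean variables x₁,…,x_r, y₁,…,y_p. Then F(x̃,ỹ) holds if and only if for all z in a suitable finite range, a conjunction over k of disjunctions Ψ_k of linear-inequality conditions on the integers x, y encoding x̃, ỹ holds; concretely, each literal x_i is equivalent to the condition that ⌊x/2^{i−1}⌋ is odd, ¬x_i to it being even, and the clause (a_k ∨ b_k ∨ c_k) is equivalent to ¬(¬a_k ∧ ¬b_k ∧ ¬c_k), where the triple conjunction is expressed by an existential over z ∈ [0,2^q)³ of a system of 6 linear inequalities. -/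
/-- `digitCond w i b z` says that `2z + b` (with `b` read as `0` or `1`) lies in the
interval `(w/2^i − 1, w/2^i]`, i.e. that `⌊w/2^i⌋ = 2z + b`, with denominators cleared. -/
def digitCond (w i : ℕ) (b : Bool) (z : ℕ) : Prop :=
  (w : ℤ) - 2 ^ i < 2 ^ i * (2 * (z : ℤ) + if b then 1 else 0) ∧
    2 ^ i * (2 * (z : ℤ) + if b then 1 else 0) ≤ (w : ℤ)

/-- A literal is a pair of a polarity and a variable index among `x₁,…,x_r,y₁,…,y_p`.
`litHolds r x y l` says the literal holds for the assignment given by the binary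
digits of `x` and `y`. -/
def litHolds (r x y : ℕ) (l : Bool × ℕ) : Prop :=
  (if l.2 < r then x / 2 ^ l.2 % 2 else y / 2 ^ (l.2 - r) % 2) = if l.1 then 1 else 0

/-- The negation of a literal, encoded by the inequality system `digitCond` with
auxiliary variable `z`. -/
def negLitCond (r x y : ℕ) (l : Bool × ℕ) (z : ℕ) : Prop :=
  if l.2 < r then digitCond x l.2 (!l.1) z else digitCond y (l.2 - r) (!l.1) z

/-!
The inequalities of `digitCond w i b z` say exactly that `⌊w / 2^i⌋ = 2z + b`, so a witness `z`
exists (and can be taken below any bound on `w`, as `z ≤ w`) iff the `i`-th binary digit of `w`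
is `b`. Hence each negated literal is a bounded existential, and a clause, being the negation of
the conjunction of its three negated literals, is the negation of a bounded existential over
triples `z`.
-/

theorem digitCond_iff (w i : ℕ) (b : Bool) (z : ℕ) :
    digitCond w i b z ↔ w / 2 ^ i = 2 * z + if b then 1 else 0 := by
  have hcast : (2 * (z : ℤ) + if b then 1 else 0) = ((2 * z + if b then 1 else 0 : ℕ) : ℤ) := by
    split <;> simp
  have hpow : (2 : ℤ) ^ i = ((2 ^ i : ℕ) : ℤ) := by push_cast; rfl
  rw [digitCond, hcast, hpow, Nat.div_eq_iff (by positivity)]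
  generalize 2 * z + (if b then 1 else 0) = d
  have hpos : 0 < 2 ^ i := by positivity
  generalize 2 ^ i = c at hpos ⊢
  rw [mul_comm d c, ← Nat.cast_mul]
  omega

theorem exists_lt_digitCond_iff {w n : ℕ} (hw : w < n) (i : ℕ) (b : Bool) :
    (∃ z < n, digitCond w i b z) ↔ w / 2 ^ i % 2 = if b then 1 else 0 := by
  simp only [digitCond_iff]
  constructor
  · rintro ⟨z, -, hz⟩
    rw [hz]
    cases b <;> simp
  · intro h
    refine ⟨w / 2 ^ i / 2, ?_, ?_⟩
    · exact (Nat.div_le_self _ _).trans_lt ((Nat.div_le_self _ _).trans_lt hw)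
    · rw [← h]
      exact (Nat.div_add_mod _ 2).symm

theorem exists_lt_negLitCond_iff {r x y n : ℕ} (hx : x < n) (hy : y < n) (l : Bool × ℕ) :
    (∃ z < n, negLitCond r x y l z) ↔ ¬ litHolds r x y l := by
  unfold negLitCond litHolds
  split
  · rw [exists_lt_digitCond_iff hx]
    cases l.1 <;> simp
  · rw [exists_lt_digitCond_iff hy]
    cases l.1 <;> simp

theorem exists_iff_not_exists_choice {ι α : Sort*} {P : ι → Prop} {Q : ι → α → Prop}
    (h : ∀ t, (∃ a, Q t a) ↔ ¬ P t) :
    (∃ t, P t) ↔ ¬ ∃ f : ι → α, ∀ t, Q t (f t) := by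
  rw [← not_forall_not, not_iff_not]
  simp only [← h]
  exact Classical.skolem

theorem threeCNF_forall_encoding_general (r p M : ℕ) (L : Fin M → Fin 3 → Bool × ℕ)
    (x y : ℕ) (hx : x < 2 ^ r) (hy : y < 2 ^ p) :
    (∀ k : Fin M, ∃ t : Fin 3, litHolds r x y (L k t)) ↔
    (∀ k : Fin M, ∀ z : Fin 3 → ℕ, (∀ t, z t < 2 ^ max r p) →
      ¬ (negLitCond r x y (L k 0) (z 0) ∧ negLitCond r x y (L k 1) (z 1) ∧
          negLitCond r x y (L k 2) (z 2))) := by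
  have hxq : x < 2 ^ max r p := hx.trans_le (Nat.pow_le_pow_right two_pos (le_max_left r p))
  have hyq : y < 2 ^ max r p := hy.trans_le (Nat.pow_le_pow_right two_pos (le_max_right r p))
  refine forall_congr' fun k => ?_
  rw [exists_iff_not_exists_choice fun t => exists_lt_negLitCond_iff hxq hyq (L k t)]
  simp only [not_exists, forall_and, not_and, Fin.forall_fin_succ, IsEmpty.forall_iff, and_true,
    Fin.succ_zero_eq_one, Fin.succ_one_eq_two]

theorem threeCNF_forall_encoding (r p M : ℕ) (L : Fin M → Fin 3 → Bool × ℕ)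
    (hL : ∀ k t, (L k t).2 < r + p)
    (x y : ℕ) (hx : x < 2 ^ r) (hy : y < 2 ^ p) :
    (∀ k : Fin M, ∃ t : Fin 3, litHolds r x y (L k t)) ↔
    (∀ k : Fin M, ∀ z : Fin 3 → ℕ, (∀ t, z t < 2 ^ max r p) →
      ¬ (negLitCond r x y (L k 0) (z 0) ∧ negLitCond r x y (L k 1) (z 1) ∧
          negLitCond r x y (L k 2) (z 2))) :=
  threeCNF_forall_encoding_general r p M L x y hx hy
end

section
/- If a finite set G ⊆ ℤ is the projection {x : ∃y ∈ ℤ^n, (x,y) ∈ P} of the integer points of a single convex polyhedron P ⊆ ℝ^{n+1}, and |G| ≥ k^{n+1} + 1, then G contains a non-trivial (k+1)-term arithmetic progression. -/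
/-!
Lift every `x ∈ G` to an integer point `(x, y) ∈ P`. Among more than `k ^ (n + 1)` lifts, two with
distinct first coordinates are congruent modulo `k`, say `q = p + k • v`. The points `p + l • v`,
`l ≤ k`, lie on the segment `[p, q]`, hence in `P`, and their first coordinates form the progression
`p.1 + l * v.1` with `v.1 ≠ 0`.
-/

theorem Convex.add_nsmul_mem_of_le {𝕜 E : Type*} [Field 𝕜] [LinearOrder 𝕜] [IsStrictOrderedRing 𝕜]
    [AddCommGroup E] [Module 𝕜 E] {s : Set E} (hs : Convex 𝕜 s) {u v : E} {k l : ℕ}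
    (hu : u ∈ s) (hk : u + k • v ∈ s) (hl : l ≤ k) : u + l • v ∈ s := by
  rcases Nat.eq_zero_or_pos k with rfl | hk_pos
  · simpa [Nat.le_zero.mp hl] using hu
  have hk' : (k : 𝕜) ≠ 0 := by positivity
  have ht : (l / k : 𝕜) ∈ Set.Icc 0 1 :=
    ⟨by positivity, div_le_one_of_le₀ (by exact_mod_cast hl) (Nat.cast_nonneg k)⟩
  convert hs.add_smul_mem hu hk ht using 2
  rw [← Nat.cast_smul_eq_nsmul 𝕜 k, smul_smul, div_mul_cancel₀ _ hk', Nat.cast_smul_eq_nsmul]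

section IntPoints

variable {ι : Type*}

def intCastPoint (R : Type*) [AddGroupWithOne R] : ℤ × (ι → ℤ) →+ R × (ι → R) :=
  (Int.castAddHom R).prodMap ((Int.castAddHom R).compLeft ι)

theorem exists_eq_add_nsmul_of_intCastPoint_zmod_eq {k : ℕ} {p q : ℤ × (ι → ℤ)}
    (h : intCastPoint (ZMod k) p = intCastPoint (ZMod k) q) : ∃ v, q = p + k • v := by
  have hdvd : ∀ a b : ℤ, (a : ZMod k) = b → ∃ c, b = a + k * c := fun a b hab => by
    obtain ⟨c, hc⟩ := (ZMod.intCast_eq_intCast_iff_dvd_sub a b k).mp hab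
    exact ⟨c, by omega⟩
  obtain ⟨c, hc⟩ := hdvd _ _ (congrArg Prod.fst h)
  choose w hw using fun i => hdvd _ _ (congrFun (congrArg Prod.snd h) i)
  exact ⟨(c, w), Prod.ext (by simpa using hc) (funext fun i => by simpa using hw i)⟩

theorem Finset.exists_ne_map_eq_add_nsmul [Fintype ι] {α : Type*} {k : ℕ} [NeZero k]
    (s : Finset α) (f : α → ℤ × (ι → ℤ)) (hs : k ^ (Fintype.card ι + 1) < s.card) :
    ∃ a ∈ s, ∃ b ∈ s, a ≠ b ∧ ∃ v, f b = f a + k • v := by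
  classical
  have hresidues : (Finset.univ : Finset (ZMod k × (ι → ZMod k))).card < s.card := by
    simpa [ZMod.card, pow_succ, mul_comm] using hs
  obtain ⟨a, ha, b, hb, hab, hfab⟩ := Finset.exists_ne_map_eq_of_card_lt_of_maps_to hresidues
    (f := fun x => intCastPoint (ZMod k) (f x)) fun _ _ => Finset.mem_coe.mpr (Finset.mem_univ _)
  exact ⟨a, ha, b, hb, hab, exists_eq_add_nsmul_of_intCastPoint_zmod_eq hfab⟩

end IntPoints

theorem single_polyhedron_projection_contains_ap (n k : ℕ) (hk : 2 ≤ k)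
    (P : Set (ℝ × (Fin n → ℝ))) (hP : Convex ℝ P)
    (G : Set ℤ)
    (hG : G = {x : ℤ | ∃ y : Fin n → ℤ,
        (((x : ℝ), fun t => (y t : ℝ)) : ℝ × (Fin n → ℝ)) ∈ P})
    (hfin : G.Finite) (hcard : k ^ (n + 1) + 1 ≤ G.ncard) :
    ∃ a d : ℤ, d ≠ 0 ∧ ∀ l : ℕ, l ≤ k → a + (l : ℤ) * d ∈ G := by
  have : NeZero k := ⟨by omega⟩
  have hlift : ∀ x ∈ G, ∃ y, intCastPoint ℝ (x, y) ∈ P := by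
    rw [hG]
    exact fun _ hx => hx
  choose! Y hY using hlift
  obtain ⟨a, ha, b, hb, hab, v, hv⟩ := hfin.toFinset.exists_ne_map_eq_add_nsmul
    (fun x => (x, Y x)) (by simpa [← Set.ncard_eq_toFinset_card _ hfin] using hcard)
  rw [Set.Finite.mem_toFinset] at ha hb
  have hba : b = a + k * v.1 := by simpa using congrArg Prod.fst hv
  refine ⟨a, v.1, fun hv0 => hab (by simp [hba, hv0]), fun l hl => ?_⟩
  have hb' := hY b hb
  rw [hv, map_add, map_nsmul] at hb'
  have hmem := hP.add_nsmul_mem_of_le (hY a ha) hb' hl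
  rw [← map_nsmul, ← map_add] at hmem
  have hpoint : ((a + l * v.1, Y a + l • v.2) : ℤ × (Fin n → ℤ)) = (a, Y a) + l • v := by
    ext <;> simp
  rw [hG]
  exact ⟨Y a + l • v.2, show intCastPoint ℝ (a + l * v.1, Y a + l • v.2) ∈ P by rwa [hpoint]⟩
end
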